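/- arXiv:2301.07328 — 4 statements merged into one kernel-verified Lean document; each statement's English description precedes it below -/
import Mathlib

section
/- Let X be a finite-dimensional real inner product space, D a symmetric positive semidefinite linear operator on X, and L a symmetric linear operator on X. If λ ∈ ℂ with Re λ > 0 is an eigenvalue of the quadratic pencil, i.e. there exists a nonzero u in the complexification of X with λ²u + λDu + Lu = 0, then λ is real. -/
/-!
Pairing the eigenvalue equation with `u` gives `λ² a + λ d + l = 0` with real coefficients
`a = ‖u‖² > 0`, `d = ⟪Du, u⟫ ≥ 0` and `l = ⟪Lu, u⟫`, by symmetry of `D` and `L`. Its imaginary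
part is `Im λ · (2 Re λ · a + d) = 0`, and the second factor is positive when `Re λ > 0`.
-/

namespace Complex

theorem im_mul_two_re_mul_add_eq_zero {z : ℂ} {a d l : ℝ}
    (h : z ^ 2 * a + z * d + l = 0) : z.im * (2 * z.re * a + d) = 0 := by
  have him := congrArg im h
  simp only [pow_two, add_im, mul_im, mul_re, ofReal_re, ofReal_im, mul_zero, add_zero,
    zero_im] at him
  linear_combination him

theorem im_eq_zero_of_sq_mul_add_mul_add_eq_zero {z : ℂ} {a d l : ℝ} (hz : 0 < z.re)
    (ha : 0 < a) (hd : 0 ≤ d) (h : z ^ 2 * a + z * d + l = 0) : z.im = 0 := by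
  have hpos : 0 < 2 * z.re * a + d := by positivity
  exact (mul_eq_zero.mp (im_mul_two_re_mul_add_eq_zero h)).resolve_right hpos.ne'

end Complex

theorem LinearMap.IsSymmetric.inner_quadratic_pencil {E : Type*} [NormedAddCommGroup E]
    [InnerProductSpace ℂ E] {D L : E →ₗ[ℂ] E} (hD : D.IsSymmetric) (hL : L.IsSymmetric)
    (lam : ℂ) (u : E) :
    inner ℂ u (lam ^ 2 • u + lam • D u + L u) =
      lam ^ 2 * (‖u‖ ^ 2 : ℝ) + lam * (inner ℂ (D u) u).re + (inner ℂ (L u) u).re := by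
  rw [Complex.conj_eq_iff_re.mp (hD.conj_inner_sym u u),
    Complex.conj_eq_iff_re.mp (hL.conj_inner_sym u u), hD, hL]
  simp only [inner_add_right, inner_smul_right, inner_self_eq_norm_sq_to_K, Complex.ofReal_pow,
    RCLike.ofReal_eq_complex_ofReal]

theorem pencil_unstable_eigenvalue_real_general
    {E : Type*} [NormedAddCommGroup E] [InnerProductSpace ℂ E]
    (D L : E →ₗ[ℂ] E)
    (hDsym : ∀ u v : E, inner ℂ (D u) v = (inner ℂ u (D v) : ℂ))
    (hLsym : ∀ u v : E, inner ℂ (L u) v = (inner ℂ u (L v) : ℂ))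
    (hDpos : ∀ u : E, 0 ≤ (inner ℂ (D u) u : ℂ).re)
    (lam : ℂ) (hre : 0 < lam.re)
    (u : E) (hu : u ≠ 0)
    (heq : lam ^ 2 • u + lam • D u + L u = 0) :
    lam.im = 0 := by
  have hpencil := LinearMap.IsSymmetric.inner_quadratic_pencil hDsym hLsym lam u
  rw [heq, inner_zero_right] at hpencil
  exact Complex.im_eq_zero_of_sq_mul_add_mul_add_eq_zero hre (by positivity) (hDpos u)
    hpencil.symm

/-- If `D` is a (complexified) symmetric positive semidefinite operator and `L`
a (complexified) symmetric operator on a finite-dimensional inner product space, then any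
eigenvalue `λ` of the quadratic pencil `λ² + λD + L` with `Re λ > 0` is real. -/
theorem pencil_unstable_eigenvalue_real
    {E : Type*} [NormedAddCommGroup E] [InnerProductSpace ℂ E] [FiniteDimensional ℂ E]
    (D L : E →ₗ[ℂ] E)
    (hDsym : ∀ u v : E, inner ℂ (D u) v = (inner ℂ u (D v) : ℂ))
    (hLsym : ∀ u v : E, inner ℂ (L u) v = (inner ℂ u (L v) : ℂ))
    (hDpos : ∀ u : E, 0 ≤ (inner ℂ (D u) u : ℂ).re)
    (lam : ℂ) (hre : 0 < lam.re)
    (u : E) (hu : u ≠ 0)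
    (heq : lam ^ 2 • u + lam • D u + L u = 0) :
    lam.im = 0 :=
  pencil_unstable_eigenvalue_real_general D L hDsym hLsym hDpos lam hre u hu heq
end

section
/- Let X be a finite-dimensional real inner product space and L a symmetric invertible linear operator on X. Consider the block operator A = [[0, I], [-L, 0]] acting on X × X. Then the number of eigenvalues of (the complexification of) A with strictly positive real part, counted with algebraic multiplicity, equals the number of negative eigenvalues of L counted with multiplicity. -/
/-!
Diagonalise `L` in an orthonormal eigenbasis `bᵢ` with eigenvalues `μᵢ`, all nonzero since `L` is
invertible. On each pair `(bᵢ, 0), (0, bᵢ)` of the complexified basis the block operator acts by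
`[[0, 1], [-μᵢ, 0]]`, so for `zᵢ² = -μᵢ` the vectors `(bᵢ, ±zᵢ bᵢ)` form an eigenbasis with
eigenvalues `±zᵢ`. Taking `zᵢ = √(-μᵢ)` or `zᵢ = i√μᵢ`, so that `Re zᵢ ≥ 0`, the eigenvalues with
positive real part are exactly the `zᵢ` with `μᵢ < 0`. For an operator with an eigenbasis the
generalised eigenspaces are the eigenspaces, spanned by the basis vectors they contain, so both
sides count the indices with `μᵢ < 0`.
-/

open TensorProduct Module

theorem Module.Basis.top_le_span_range_sumElim_add_smul {K V ι : Type*} [Field K] [AddCommGroup V]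
    [Module K V] (c : Basis (ι ⊕ ι) K V) (h2 : (2 : K) ≠ 0)
    {z : ι → K} (hz : ∀ i, z i ≠ 0) :
    ⊤ ≤ Submodule.span K (Set.range (Sum.elim (fun i => c (.inl i) + z i • c (.inr i))
      (fun i => c (.inl i) + (-z i) • c (.inr i)))) := by
  set S := Submodule.span K (Set.range (Sum.elim (fun i => c (.inl i) + z i • c (.inr i))
      (fun i => c (.inl i) + (-z i) • c (.inr i))))
  have hplus (i : ι) : c (.inl i) + z i • c (.inr i) ∈ S := Submodule.subset_span ⟨.inl i, rfl⟩
  have hminus (i : ι) : c (.inl i) + (-z i) • c (.inr i) ∈ S :=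
    Submodule.subset_span ⟨.inr i, rfl⟩
  refine ((Submodule.eq_top_iff_forall_basis_mem c).mpr ?_).ge
  rintro (i | i)
  · convert S.smul_mem (2 : K)⁻¹ (S.add_mem (hplus i) (hminus i)) using 1
    rw [add_add_add_comm, ← add_smul, add_neg_cancel, zero_smul, add_zero, ← two_smul K,
      inv_smul_smul₀ h2]
  · convert S.smul_mem (2 * z i)⁻¹ (S.sub_mem (hplus i) (hminus i)) using 1
    rw [add_sub_add_left_eq_sub, ← sub_smul, sub_neg_eq_add, ← two_mul,
      inv_smul_smul₀ (mul_ne_zero h2 (hz i))]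

namespace Module.End

variable {K V ι : Type*} [Field K] [AddCommGroup V] [Module K V]
  {f : End K V} {d : ι → K} (b : Basis ι K V)

theorem eq_toLin_diagonal_of_apply_basis [Fintype ι] [DecidableEq ι]
    (hb : ∀ i, f (b i) = d i • b i) : f = Matrix.toLin b b (Matrix.diagonal d) :=
  b.ext fun i => by simp [Matrix.toLin_self, Matrix.diagonal_apply, hb]

theorem repr_apply_of_apply_basis (hb : ∀ i, f (b i) = d i • b i) (x : V) (i : ι) :
    b.repr (f x) i = d i * b.repr x i := by
  have h : b.coord i ∘ₗ f = d i • b.coord i :=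
    b.ext fun j => by by_cases hji : j = i <;> simp [hb, hji]
  simpa using LinearMap.congr_fun h x

theorem eigenspace_eq_span_of_apply_basis (hb : ∀ i, f (b i) = d i • b i) (c : K) :
    f.eigenspace c = Submodule.span K (b '' {i | d i = c}) := by
  refine le_antisymm (fun x hx => ?_) (Submodule.span_le.mpr ?_)
  · rw [b.mem_span_image]
    intro i hi
    have hx : b.repr (f x) i = b.repr (c • x) i := by rw [mem_eigenspace_iff.mp hx]
    rw [repr_apply_of_apply_basis b hb, map_smul, Finsupp.smul_apply, smul_eq_mul] at hx
    exact mul_right_cancel₀ (Finsupp.mem_support_iff.mp hi) hx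
  · rintro _ ⟨i, rfl : d i = c, rfl⟩
    exact mem_eigenspace_iff.mpr (hb i)

theorem maxGenEigenspace_eq_eigenspace_of_apply_basis [Fintype ι]
    (hb : ∀ i, f (b i) = d i • b i) (c : K) : f.maxGenEigenspace c = f.eigenspace c := by
  classical
  rw [eq_toLin_diagonal_of_apply_basis b hb]
  exact Matrix.maxGenEigenspace_toLin_diagonal_eq_eigenspace d b

theorem iSup_eigenspace_eq_span_of_apply_basis (hb : ∀ i, f (b i) = d i • b i) (P : K → Prop) :
    ⨆ c : {c // P c}, f.eigenspace c = Submodule.span K (b '' {i | P (d i)}) := by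
  refine le_antisymm (iSup_le fun c => ?_) (Submodule.span_le.mpr ?_)
  · rw [eigenspace_eq_span_of_apply_basis b hb]
    exact Submodule.span_mono (Set.image_mono fun i (hi : d i = c) => show P (d i) from hi ▸ c.2)
  · rintro _ ⟨i, hi, rfl⟩
    exact Submodule.mem_iSup_of_mem ⟨d i, hi⟩ (mem_eigenspace_iff.mpr (hb i))

theorem finrank_iSup_eigenspace_of_apply_basis [Finite ι]
    (hb : ∀ i, f (b i) = d i • b i) (P : K → Prop) :
    finrank K ↥(⨆ c : {c // P c}, f.eigenspace c) = Nat.card {i // P (d i)} := by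
  classical
  have := Fintype.ofFinite ι
  rw [iSup_eigenspace_eq_span_of_apply_basis b hb, Set.image_eq_range, Nat.card_eq_fintype_card]
  exact finrank_span_eq_card (b.linearIndependent.comp _ Subtype.val_injective)

theorem finrank_iSup_maxGenEigenspace_of_apply_basis [Finite ι]
    (hb : ∀ i, f (b i) = d i • b i) (P : K → Prop) :
    finrank K ↥(⨆ c : {c // P c}, f.maxGenEigenspace c) = Nat.card {i // P (d i)} := by
  have := Fintype.ofFinite ι
  have h : ⨆ c : {c // P c}, f.maxGenEigenspace c = ⨆ c : {c // P c}, f.eigenspace c :=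
    iSup_congr fun c => maxGenEigenspace_eq_eigenspace_of_apply_basis b hb c
  rw [h]
  exact finrank_iSup_eigenspace_of_apply_basis b hb P

theorem apply_add_smul_eq_smul_of_apply_eq {R M : Type*} [Semiring R] [AddCommMonoid M]
    [Module R M] {g : End R M} {u v : M} {a z : R} (hu : g u = a • v) (hv : g v = u)
    (hz : z * z = a) : g (u + z • v) = z • (u + z • v) := by
  rw [map_add, map_smul, hu, hv, smul_add, smul_smul, hz, add_comm]

theorem finrank_iSup_maxGenEigenspace_of_swap_basis [Finite ι] (h2 : (2 : K) ≠ 0)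
    (c : Basis (ι ⊕ ι) K V) {g : End K V} {a z : ι → K}
    (hinl : ∀ i, g (c (.inl i)) = a i • c (.inr i)) (hinr : ∀ i, g (c (.inr i)) = c (.inl i))
    (hz : ∀ i, z i * z i = a i) (hz0 : ∀ i, z i ≠ 0) (P : K → Prop) :
    finrank K ↥(⨆ μ : {μ // P μ}, g.maxGenEigenspace μ)
      = Nat.card {i // P (z i)} + Nat.card {i // P (-z i)} := by
  have := Fintype.ofFinite ι
  have := Module.Finite.of_basis c
  let w : Basis (ι ⊕ ι) K V := basisOfTopLeSpanOfCardEqFinrank _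
    (c.top_le_span_range_sumElim_add_smul h2 hz0) (finrank_eq_card_basis c).symm
  have hw : ∀ j, g (w j) = Sum.elim z (fun i => -z i) j • w j := by
    rintro (i | i)
    · simpa [w] using apply_add_smul_eq_smul_of_apply_eq (hinl i) (hinr i) (hz i)
    · simpa [w] using apply_add_smul_eq_smul_of_apply_eq (hinl i) (hinr i)
        ((neg_mul_neg _ _).trans (hz i))
  rw [finrank_iSup_maxGenEigenspace_of_apply_basis w hw, Nat.card_congr Equiv.subtypeSum,
    Nat.card_sum]
  rfl

end Module.End

theorem Complex.exists_mul_self_eq_ofReal (a : ℝ) :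
    ∃ z : ℂ, z * z = a ∧ 0 ≤ z.re ∧ (0 < z.re ↔ 0 < a) := by
  rcases le_or_gt 0 a with ha | ha
  · refine ⟨√a, by rw [← ofReal_mul, Real.mul_self_sqrt ha], Real.sqrt_nonneg a, ?_⟩
    simp [Real.sqrt_pos]
  · refine ⟨I * √(-a), ?_, by simp, by simp [ha.not_gt]⟩
    rw [mul_mul_mul_comm, I_mul_I, ← ofReal_mul, Real.mul_self_sqrt (neg_nonneg.mpr ha.le)]
    push_cast
    ring

/-- For `L` symmetric and invertible on a finite-dimensional real inner product
space `X`, the number of eigenvalues (counted with algebraic multiplicity) with positive real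
part of the complexification of the block operator `A = [[0, I], [-L, 0]]` on `X × X` equals
the number of negative eigenvalues of `L` counted with multiplicity. -/
theorem block_operator_unstable_count_eq_neg_index
    {X : Type*} [NormedAddCommGroup X] [InnerProductSpace ℝ X] [FiniteDimensional ℝ X]
    (L : X →ₗ[ℝ] X) (hLsym : L.IsSymmetric) (hLinv : Function.Bijective L)
    (A : (X × X) →ₗ[ℝ] (X × X))
    (hA : ∀ p : X × X, A p = (p.2, -(L p.1))) :
    Module.finrank ℂ ↥
        (⨆ lam : {lam : ℂ // 0 < lam.re},
          Module.End.maxGenEigenspace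
            (LinearMap.baseChange ℂ A : Module.End ℂ (ℂ ⊗[ℝ] (X × X))) lam.1)
      = Module.finrank ℝ
        ↥(⨆ mu : {mu : ℝ // mu < 0},
          Module.End.eigenspace (L : Module.End ℝ X) mu.1) := by
  obtain ⟨n, hn⟩ : ∃ n, finrank ℝ X = n := ⟨_, rfl⟩
  let b := (hLsym.eigenvectorBasis hn).toBasis
  let μ := hLsym.eigenvalues hn
  have hb (i : Fin n) : L (b i) = μ i • b i := by
    simp [b, μ, hLsym.apply_eigenvectorBasis hn i]
  have hμ (i : Fin n) : μ i ≠ 0 := fun h =>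
    b.ne_zero i (hLinv.injective (by rw [hb, h, zero_smul, map_zero]))
  choose z hz hz_re hz_pos using fun i => Complex.exists_mul_self_eq_ofReal (-μ i)
  have hz0 (i : Fin n) : z i ≠ 0 := fun h => hμ i (by simpa [h] using hz i)
  let c := (b.prod b).baseChange ℂ
  have hinl (i : Fin n) : A.baseChange ℂ (c (.inl i)) = ((-μ i : ℝ) : ℂ) • c (.inr i) := by
    have h : A (b i, 0) = (-μ i) • (0, b i) := by simp [hA, hb]
    simp only [c, Basis.baseChange_apply, Basis.prod_apply, Sum.elim_inl, Sum.elim_inr,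
      Function.comp_apply, LinearMap.inl_apply, LinearMap.inr_apply, LinearMap.baseChange_tmul, h,
      tmul_smul, ← Complex.coe_algebraMap, algebraMap_smul]
  have hinr (i : Fin n) : A.baseChange ℂ (c (.inr i)) = c (.inl i) := by
    simp [c, hA]
  rw [Module.End.finrank_iSup_maxGenEigenspace_of_swap_basis two_ne_zero c hinl hinr hz hz0,
    Module.End.finrank_iSup_eigenspace_of_apply_basis b hb]
  have : IsEmpty {i // 0 < (-z i).re} := ⟨fun ⟨i, hi⟩ => (hz_re i).not_gt (by simpa using hi)⟩
  rw [Nat.card_of_isEmpty (α := {i // 0 < (-z i).re}), add_zero]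
  exact Nat.card_congr (Equiv.subtypeEquivRight fun i => (hz_pos i).trans neg_pos)
end

section
/- (Hardy inequality, case k > 1) Let k > 1 be real and let g : (0,1) → ℝ be continuously differentiable with ∫₀¹ s^k (|g(s)|² + |g'(s)|²) ds < ∞. Then there exists a constant C, depending only on k, such that ∫₀¹ s^{k-2} |g(s)|² ds ≤ C ∫₀¹ s^k (|g(s)|² + |g'(s)|²) ds. -/
open MeasureTheory Real Set
open scoped NNReal ENNReal

/-!
With `φ s = s ^ (k - 1) * g s ^ 2` and `c = 2 / (k - 1)`, the identity `c * (k - 1) = 2` lets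
one complete a square: `(c * φ)' ≥ s ^ (k - 2) * g ^ 2 - c ^ 2 * s ^ k * g' ^ 2`. Integrating
over `[a, t]` bounds `∫ s ^ (k - 2) * g ^ 2` by `c * φ t + c ^ 2 * ∫ s ^ k * g' ^ 2` uniformly in
`a > 0`, which controls the singular end `s → 0`. The endpoint `t ∈ (1/2, 1)` is taken where `φ`
is at most its mean, hence at most four times the energy, and on `[t, 1)` the weights
`s ^ (k - 2)` and `s ^ k` are comparable. Altogether `C = (c + 2) ^ 2`.
-/

theorem rpow_sub_natCast_le_two_pow_mul {s : ℝ} (hs : 1 / 2 ≤ s) (k : ℝ) (m : ℕ) :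
    s ^ (k - m) ≤ 2 ^ m * s ^ k := by
  have hs0 : 0 < s := by linarith
  rw [rpow_sub hs0, rpow_natCast, div_le_iff₀ (by positivity)]
  calc s ^ k ≤ s ^ k * (2 * s) ^ m :=
        le_mul_of_one_le_right (rpow_nonneg hs0.le k) (one_le_pow₀ (by linarith))
    _ = 2 ^ m * s ^ k * s ^ m := by ring

theorem rpow_mul_sq_sub_le {s : ℝ} (hs : 0 < s) (k c x y : ℝ) :
    s ^ (k - 2) * x ^ 2 - c ^ 2 * (s ^ k * y ^ 2) ≤
      2 * (s ^ (k - 2) * x ^ 2) + 2 * c * (s ^ (k - 1) * x * y) := by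
  have h1 : s ^ (k - 1) = s ^ (k - 2) * s := by rw [← rpow_add_one hs.ne']; ring_nf
  have h2 : s ^ k = s ^ (k - 2) * s ^ 2 := by
    rw [← rpow_natCast, ← rpow_add hs]; ring_nf
  rw [h1, h2]
  nlinarith [mul_nonneg (rpow_nonneg hs.le (k - 2)) (sq_nonneg (x + c * s * y))]

theorem continuousOn_rpow_mul_sq {f : ℝ → ℝ} {s : Set ℝ} (hs : s ⊆ Ioi 0)
    (hf : ContinuousOn f s) (p : ℝ) : ContinuousOn (fun x => x ^ p * f x ^ 2) s :=
  (continuousOn_id.rpow_const fun _ hx => Or.inl (hs hx).ne').mul (hf.pow 2)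

theorem setLIntegral_Ioo_le_of_forall_Ioo_le {μ : Measure ℝ} {f : ℝ → ℝ≥0∞} {a b : ℝ}
    {c : ℝ≥0∞} (h : ∀ a' ∈ Ioo a b, ∫⁻ x in Ioo a' b, f x ∂μ ≤ c) :
    ∫⁻ x in Ioo a b, f x ∂μ ≤ c := by
  rcases le_or_gt b a with hba | hab
  · simp [Ioo_eq_empty_of_le hba]
  obtain ⟨u, hu_anti, hu_mem, hu_lim⟩ := exists_seq_strictAnti_tendsto' hab
  have hunion : Ioo a b = ⋃ n, Ioo (u n) b := by
    ext x
    simp only [mem_iUnion, mem_Ioo]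
    refine ⟨fun hx => ?_, fun ⟨n, hn, hxb⟩ => ⟨(hu_mem n).1.trans hn, hxb⟩⟩
    obtain ⟨n, hn⟩ := (hu_lim.eventually (gt_mem_nhds hx.1)).exists
    exact ⟨n, hn, hx.2⟩
  rw [hunion, setLIntegral_iUnion_of_directed _ (hu_anti.antitone.Ioo monotone_const).directed_le]
  exact iSup_le fun n => h _ (hu_mem n)

theorem ofReal_intervalIntegral_eq_setLIntegral_Ioo {f : ℝ → ℝ} {a b : ℝ} (hab : a ≤ b)
    (hf : IntegrableOn f (Ioo a b)) (hnn : ∀ x ∈ Ioo a b, 0 ≤ f x) :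
    ENNReal.ofReal (∫ x in a..b, f x) = ∫⁻ x in Ioo a b, ENNReal.ofReal (f x) := by
  rw [intervalIntegral.integral_of_le hab, integral_Ioc_eq_integral_Ioo,
    ofReal_integral_eq_lintegral_ofReal hf
      ((ae_restrict_iff' measurableSet_Ioo).2 (ae_of_all _ hnn))]

theorem integral_rpow_mul_sq_le {k a t : ℝ} {g g' : ℝ → ℝ} (hk : 1 < k) (ha : 0 < a)
    (hat : a ≤ t) (hg : ∀ s ∈ Icc a t, HasDerivAt g (g' s) s) (hg' : ContinuousOn g' (Icc a t)) :
    ∫ s in a..t, s ^ (k - 2) * g s ^ 2 ≤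
      2 / (k - 1) * (t ^ (k - 1) * g t ^ 2) +
        (2 / (k - 1)) ^ 2 * ∫ s in a..t, s ^ k * g' s ^ 2 := by
  set c := 2 / (k - 1)
  have hpos : Icc a t ⊆ Ioi 0 := fun s hs => ha.trans_le hs.1
  have hgc : ContinuousOn g (Icc a t) := fun s hs => (hg s hs).continuousAt.continuousWithinAt
  have hI := continuousOn_rpow_mul_sq hpos hgc (k - 2)
  have hJ := continuousOn_rpow_mul_sq hpos hg' k
  have hderiv : ∀ s ∈ Icc a t, HasDerivAt (fun x => c * (x ^ (k - 1) * g x ^ 2))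
      (2 * (s ^ (k - 2) * g s ^ 2) + 2 * c * (s ^ (k - 1) * g s * g' s)) s := by
    intro s hs
    refine (((hasDerivAt_rpow_const (Or.inl (hpos hs).ne')).fun_mul
      ((hg s hs).fun_pow 2)).const_mul c).congr_deriv ?_
    have hk1 : k - 1 ≠ 0 := by linarith
    rw [show k - 1 - 1 = k - 2 by ring]
    simp only [c]
    field_simp
    ring
  have hmain := intervalIntegral.integral_le_sub_of_hasDeriv_right_of_le
    (φ := fun s => s ^ (k - 2) * g s ^ 2 - c ^ 2 * (s ^ k * g' s ^ 2)) hat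
    ((continuousOn_rpow_mul_sq hpos hgc (k - 1)).const_mul c)
    (fun s hs => (hderiv s (Ioo_subset_Icc_self hs)).hasDerivWithinAt)
    (hI.sub (hJ.const_mul (c ^ 2))).integrableOn_Icc
    (fun s hs => rpow_mul_sq_sub_le (hpos (Ioo_subset_Icc_self hs)) k c (g s) (g' s))
  rw [intervalIntegral.integral_sub (hI.intervalIntegrable_of_Icc hat)
    ((hJ.const_mul _).intervalIntegrable_of_Icc hat), intervalIntegral.integral_const_mul] at hmain
  have : 0 ≤ c * (a ^ (k - 1) * g a ^ 2) :=
    mul_nonneg (by positivity) (mul_nonneg (rpow_nonneg ha.le _) (sq_nonneg _))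
  linarith

theorem setLIntegral_Ioo_rpow_mul_sq_le {k a t : ℝ} {g g' : ℝ → ℝ} (hk : 1 < k) (ha : 0 < a)
    (hat : a ≤ t) (hg : ∀ s ∈ Icc a t, HasDerivAt g (g' s) s) (hg' : ContinuousOn g' (Icc a t)) :
    ∫⁻ s in Ioo a t, ENNReal.ofReal (s ^ (k - 2) * g s ^ 2) ≤
      ENNReal.ofReal (2 / (k - 1)) * ENNReal.ofReal (t ^ (k - 1) * g t ^ 2) +
        ENNReal.ofReal (2 / (k - 1)) ^ 2 * ∫⁻ s in Ioo a t, ENNReal.ofReal (s ^ k * g' s ^ 2) := by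
  have hpos : Icc a t ⊆ Ioi 0 := fun s hs => ha.trans_le hs.1
  have hgc : ContinuousOn g (Icc a t) := fun s hs => (hg s hs).continuousAt.continuousWithinAt
  have hnn : ∀ (p : ℝ) (f : ℝ → ℝ), ∀ s ∈ Ioo a t, 0 ≤ s ^ p * f s ^ 2 := fun p f s hs =>
    mul_nonneg (rpow_nonneg (ha.trans hs.1).le p) (sq_nonneg _)
  have hc : 0 ≤ 2 / (k - 1) := div_nonneg zero_le_two (by linarith)
  calc ∫⁻ s in Ioo a t, ENNReal.ofReal (s ^ (k - 2) * g s ^ 2)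
      = ENNReal.ofReal (∫ s in a..t, s ^ (k - 2) * g s ^ 2) :=
        (ofReal_intervalIntegral_eq_setLIntegral_Ioo hat ((continuousOn_rpow_mul_sq hpos hgc
          _).integrableOn_Icc.mono_set Ioo_subset_Icc_self) (hnn _ g)).symm
    _ ≤ ENNReal.ofReal (2 / (k - 1) * (t ^ (k - 1) * g t ^ 2) +
          (2 / (k - 1)) ^ 2 * ∫ s in a..t, s ^ k * g' s ^ 2) :=
        ENNReal.ofReal_le_ofReal (integral_rpow_mul_sq_le hk ha hat hg hg')
    _ ≤ _ := ENNReal.ofReal_add_le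
    _ = _ := by
      rw [ENNReal.ofReal_mul (pow_nonneg hc 2), ENNReal.ofReal_pow hc, ENNReal.ofReal_mul hc,
        ofReal_intervalIntegral_eq_setLIntegral_Ioo hat ((continuousOn_rpow_mul_sq hpos hg'
          _).integrableOn_Icc.mono_set Ioo_subset_Icc_self) (hnn _ g')]

theorem setLIntegral_Ioo_zero_rpow_mul_sq_le {k t : ℝ} {g g' : ℝ → ℝ} (hk : 1 < k)
    (hg : ∀ s ∈ Ioc 0 t, HasDerivAt g (g' s) s) (hg' : ContinuousOn g' (Ioc 0 t)) :
    ∫⁻ s in Ioo 0 t, ENNReal.ofReal (s ^ (k - 2) * g s ^ 2) ≤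
      ENNReal.ofReal (2 / (k - 1)) * ENNReal.ofReal (t ^ (k - 1) * g t ^ 2) +
        ENNReal.ofReal (2 / (k - 1)) ^ 2 * ∫⁻ s in Ioo 0 t, ENNReal.ofReal (s ^ k * g' s ^ 2) :=
  setLIntegral_Ioo_le_of_forall_Ioo_le fun a ha =>
    have hsub : Icc a t ⊆ Ioc 0 t := Icc_subset_Ioc ha.1 le_rfl
    (setLIntegral_Ioo_rpow_mul_sq_le hk ha.1 ha.2.le (fun s hs => hg s (hsub hs))
      (hg'.mono hsub)).trans
      (add_le_add_right (mul_le_mul_right (lintegral_mono_set (Ioo_subset_Ioo_left ha.1.le)) _) _)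

theorem setLIntegral_rpow_sub_mul_sq_le {k : ℝ} {s : Set ℝ} (hs : MeasurableSet s)
    (hs' : s ⊆ Ici (1 / 2)) (m : ℕ) (g g' : ℝ → ℝ) :
    ∫⁻ x in s, ENNReal.ofReal (x ^ (k - m) * g x ^ 2) ≤
      2 ^ m * ∫⁻ x in s, ENNReal.ofReal (x ^ k * (g x ^ 2 + g' x ^ 2)) := by
  rw [← lintegral_const_mul' _ _ (by simp)]
  refine setLIntegral_mono' hs fun x hx => ?_
  have hx0 : 0 ≤ x ^ k := rpow_nonneg (by linarith [mem_Ici.1 (hs' hx)]) k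
  calc ENNReal.ofReal (x ^ (k - m) * g x ^ 2)
      ≤ ENNReal.ofReal (2 ^ m * (x ^ k * (g x ^ 2 + g' x ^ 2))) := by
        refine ENNReal.ofReal_le_ofReal ?_
        have := rpow_sub_natCast_le_two_pow_mul (hs' hx) k m
        nlinarith [mul_le_mul_of_nonneg_right this (sq_nonneg (g x)),
          mul_nonneg (mul_nonneg (pow_nonneg zero_le_two m) hx0) (sq_nonneg (g' x))]
    _ = 2 ^ m * ENNReal.ofReal (x ^ k * (g x ^ 2 + g' x ^ 2)) := by
        rw [ENNReal.ofReal_mul (by positivity)]; simp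

theorem exists_mem_Ioo_ofReal_rpow_mul_sq_le {g : ℝ → ℝ} (hg : ContinuousOn g (Ioo (1 / 2) 1))
    (k : ℝ) (g' : ℝ → ℝ) : ∃ t ∈ Ioo (1 / 2 : ℝ) 1, ENNReal.ofReal (t ^ (k - 1) * g t ^ 2) ≤
      4 * ∫⁻ x in Ioo (1 / 2) 1, ENNReal.ofReal (x ^ k * (g x ^ 2 + g' x ^ 2)) := by
  have hpos : Ioo (1 / 2 : ℝ) 1 ⊆ Ioi 0 := fun _ hx => one_half_pos.trans hx.1
  obtain ⟨t, ht, hle⟩ := exists_le_setLAverage (μ := volume) (by norm_num) (by simp)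
    (ENNReal.measurable_ofReal.comp_aemeasurable
      ((continuousOn_rpow_mul_sq hpos hg (k - 1)).aemeasurable measurableSet_Ioo))
  refine ⟨t, ht, hle.trans ?_⟩
  have := setLIntegral_rpow_sub_mul_sq_le (k := k) (measurableSet_Ioo (b := 1))
    (Ioo_subset_Ioi_self.trans Ioi_subset_Ici_self) 1 g g'
  rw [setLAverage_eq, Real.volume_Ioo, show (1 : ℝ) - 1 / 2 = 2⁻¹ by norm_num,
    ENNReal.ofReal_inv_of_pos two_pos, ENNReal.ofReal_ofNat, div_eq_mul_inv, inv_inv]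
  simp only [Nat.cast_one, pow_one] at this
  calc _ ≤ 2 * (∫⁻ x in Ioo (1 / 2) 1, ENNReal.ofReal (x ^ k * (g x ^ 2 + g' x ^ 2))) * 2 :=
        mul_le_mul_left this 2
    _ = _ := by ring

/-- Hardy inequality, case `k > 1`: for `k > 1` there is a constant `C`
depending only on `k` such that for every `C¹` function `g` on `(0,1)`,
`∫₀¹ s^(k-2) |g|² ds ≤ C ∫₀¹ s^k (|g|² + |g'|²) ds`. -/
theorem hardy_inequality_k_gt_one (k : ℝ) (hk : 1 < k) :
    ∃ C : ℝ≥0, ∀ g g' : ℝ → ℝ,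
      (∀ s ∈ Ioo (0 : ℝ) 1, HasDerivAt g (g' s) s) →
      ContinuousOn g' (Ioo (0 : ℝ) 1) →
      (∫⁻ s in Ioo (0 : ℝ) 1, ENNReal.ofReal (s ^ k * (|g s| ^ 2 + |g' s| ^ 2))) < ⊤ →
      (∫⁻ s in Ioo (0 : ℝ) 1, ENNReal.ofReal (s ^ (k - 2) * |g s| ^ 2))
        ≤ C * ∫⁻ s in Ioo (0 : ℝ) 1, ENNReal.ofReal (s ^ k * (|g s| ^ 2 + |g' s| ^ 2)) := by
  refine ⟨((2 / (k - 1)).toNNReal + 2) ^ 2, fun g g' hg hg' _ => ?_⟩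
  simp only [sq_abs]
  set E := ∫⁻ s in Ioo (0 : ℝ) 1, ENNReal.ofReal (s ^ k * (g s ^ 2 + g' s ^ 2))
  set c := ENNReal.ofReal (2 / (k - 1))
  have hgc : ContinuousOn g (Ioo 0 1) := fun s hs => (hg s hs).continuousAt.continuousWithinAt
  have hhalf : Ioo (1 / 2 : ℝ) 1 ⊆ Ioo 0 1 := Ioo_subset_Ioo_left one_half_pos.le
  obtain ⟨t, ht, hφt⟩ := exists_mem_Ioo_ofReal_rpow_mul_sq_le (hgc.mono hhalf) k g'
  have hsub : Ioc 0 t ⊆ Ioo 0 1 := Ioc_subset_Ioo_right ht.2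
  have hnear := (setLIntegral_Ioo_zero_rpow_mul_sq_le hk (fun s hs => hg s (hsub hs))
    (hg'.mono hsub)).trans (show _ ≤ c * (4 * E) + c ^ 2 * E by
      gcongr
      · exact hφt.trans (by gcongr; exact lintegral_mono_set hhalf)
      · refine (lintegral_mono_set (Ioo_subset_Ioc_self.trans hsub)).trans
          (setLIntegral_mono' measurableSet_Ioo fun s hs => ENNReal.ofReal_le_ofReal ?_)
        exact mul_le_mul_of_nonneg_left (le_add_of_nonneg_left (sq_nonneg _))
          (rpow_nonneg hs.1.le k))
  have hfar := (setLIntegral_rpow_sub_mul_sq_le (k := k) (measurableSet_Ico (b := 1))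
    (fun s hs => (ht.1.trans_le hs.1).le) 2 g g').trans
    (mul_le_mul_right (lintegral_mono_set (Ico_subset_Ioo_left (one_half_pos.trans ht.1))) _)
  rw [Nat.cast_ofNat] at hfar
  calc ∫⁻ s in Ioo 0 1, ENNReal.ofReal (s ^ (k - 2) * g s ^ 2)
      = ∫⁻ s in Ioo 0 t ∪ Ico t 1, ENNReal.ofReal (s ^ (k - 2) * g s ^ 2) := by
        rw [Ioo_union_Ico_eq_Ioo (one_half_pos.trans ht.1) ht.2.le]
    _ ≤ _ := lintegral_union_le _ _ _
    _ ≤ c * (4 * E) + c ^ 2 * E + 2 ^ 2 * E := add_le_add hnear hfar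
    _ = (c + 2) ^ 2 * E := by ring
    _ = _ := by push_cast; rfl
end

section
/- (Hardy inequality, case k < 1) Let k < 1 be real and let g : (0,1] → ℝ be continuously differentiable with ∫₀¹ s^k |g'(s)|² ds < ∞ and ∫₀¹ s^k |g(s)|² ds < ∞. Then g extends continuously to s = 0 (i.e. the limit g(0) := lim_{s→0⁺} g(s) exists), and there is a constant C depending only on k with ∫₀¹ s^{k-2} |g(s) - g(0)|² ds ≤ C ∫₀¹ s^k |g'(s)|² ds. -/
open MeasureTheory Real Set Filter
open scoped NNReal ENNReal Topology

/-!
Since `k < 1`, Cauchy–Schwarz with the weight `s ^ k` bounds `∫₀¹ |g'|` by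
`(∫₀¹ s ^ (-k))^(1/2) (∫₀¹ s ^ k |g'|²)^(1/2) < ∞`, so `g'` is integrable near `0`,
the trace `g(0)` exists and `g t - g(0) = ∫₀ᵗ g'`. Cauchy–Schwarz again, now with the weight
`σ ^ ((k + 1) / 2)` on `(0, t)`, gives
`|g t - g(0)|² ≤ (2 / (1 - k)) t ^ ((1 - k) / 2) ∫₀ᵗ σ ^ ((k + 1) / 2) |g' σ|² dσ`.
Integrating against `t ^ (k - 2)` and exchanging the order of integration, the inner integral
`∫_σ^1 t ^ ((k - 3) / 2) dt ≤ (2 / (1 - k)) σ ^ ((k - 1) / 2)` restores the weight `σ ^ k`,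
which yields `C = (2 / (1 - k))²`.
-/

theorem sq_lintegral_le_lintegral_inv_mul_lintegral {α : Type*} [MeasurableSpace α]
    {μ : Measure α} {u w : α → ℝ≥0∞} (hu : AEMeasurable u μ) (hw : AEMeasurable w μ)
    (hw0 : ∀ᵐ x ∂μ, w x ≠ 0) (hwt : ∀ᵐ x ∂μ, w x ≠ ⊤) :
    (∫⁻ x, u x ∂μ) ^ 2 ≤ (∫⁻ x, (w x)⁻¹ ∂μ) * ∫⁻ x, w x * u x ^ 2 ∂μ := by
  have hsq : ∀ y : ℝ≥0∞, (y ^ (1 / 2 : ℝ)) ^ 2 = y := fun y ↦ by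
    rw [← ENNReal.rpow_natCast, ← ENNReal.rpow_mul]; norm_num
  have hsplit : ∀ᵐ x ∂μ, u x = (w x)⁻¹ ^ (1 / 2 : ℝ) * (w x ^ (1 / 2 : ℝ) * u x) := by
    filter_upwards [hw0, hwt] with x h0 ht
    rw [← mul_assoc, ← ENNReal.mul_rpow_of_nonneg _ _ (by norm_num),
      ENNReal.inv_mul_cancel h0 ht, ENNReal.one_rpow, one_mul]
  have hCS := ENNReal.lintegral_mul_le_Lp_mul_Lq μ Real.HolderConjugate.two_two
    (hw.inv.pow_const (1 / 2 : ℝ)) ((hw.pow_const (1 / 2 : ℝ)).mul hu)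
  simp only [Pi.mul_apply, Pi.inv_apply, ENNReal.rpow_two, mul_pow, hsq] at hCS
  rw [lintegral_congr_ae hsplit]
  calc _ ≤ ((∫⁻ x, (w x)⁻¹ ∂μ) ^ (1 / 2 : ℝ) *
        (∫⁻ x, w x * u x ^ 2 ∂μ) ^ (1 / 2 : ℝ)) ^ 2 := by
        gcongr
    _ = _ := by rw [mul_pow, hsq, hsq]

theorem lintegral_Ioo_rpow_of_neg_one_lt {r t : ℝ} (hr : -1 < r) (ht : 0 ≤ t) :
    ∫⁻ x in Ioo 0 t, ENNReal.ofReal (x ^ r) = ENNReal.ofReal (t ^ (r + 1) / (r + 1)) := by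
  have hint : IntegrableOn (fun x : ℝ ↦ x ^ r) (Ioo 0 t) :=
    (intervalIntegral.intervalIntegrable_rpow' hr).1.mono_set Ioo_subset_Ioc_self
  rw [← ofReal_integral_eq_lintegral_ofReal hint
    ((ae_restrict_iff' measurableSet_Ioo).2 (ae_of_all _ fun x hx ↦ rpow_nonneg hx.1.le r)),
    ← integral_Ioc_eq_integral_Ioo, ← intervalIntegral.integral_of_le ht,
    integral_rpow (Or.inl hr), zero_rpow (by linarith), sub_zero]

theorem lintegral_Ioi_rpow_of_lt {q x : ℝ} (hq : q < -1) (hx : 0 < x) :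
    ∫⁻ t in Ioi x, ENNReal.ofReal (t ^ q) = ENNReal.ofReal (-x ^ (q + 1) / (q + 1)) := by
  rw [← integral_Ioi_rpow_of_lt hq hx, ofReal_integral_eq_lintegral_ofReal
    (integrableOn_Ioi_rpow_of_lt hq hx)
    ((ae_restrict_iff' measurableSet_Ioi).2
      (ae_of_all _ fun t ht ↦ rpow_nonneg (hx.trans ht).le q))]

theorem lintegral_mul_lintegral_Ioo_swap {a b : ℝ} {f g : ℝ → ℝ≥0∞}
    (hf : AEMeasurable f (volume.restrict (Ioo a b)))
    (hg : AEMeasurable g (volume.restrict (Ioo a b))) :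
    ∫⁻ t in Ioo a b, f t * ∫⁻ x in Ioo a t, g x =
      ∫⁻ x in Ioo a b, g x * ∫⁻ t in Ioo x b, f t := by
  set W : ℝ × ℝ → ℝ≥0∞ := {p | p.2 < p.1}.indicator fun p ↦ f p.1 * g p.2
  have hW : AEMeasurable W ((volume.restrict (Ioo a b)).prod (volume.restrict (Ioo a b))) :=
    (hf.comp_fst.mul hg.comp_snd).indicator (measurableSet_lt measurable_snd measurable_fst)
  have hsection_fst :
      ∀ t ∈ Ioo a b, ∫⁻ x in Ioo a b, W (t, x) = f t * ∫⁻ x in Ioo a t, g x := by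
    intro t ht
    have hslice : (fun x ↦ W (t, x)) = (Iio t).indicator fun x ↦ f t * g x := by
      ext x; simp [W, Set.indicator_apply]
    rw [hslice, lintegral_indicator measurableSet_Iio, Measure.restrict_restrict measurableSet_Iio,
      Iio_inter_Ioo, min_eq_left ht.2.le]
    exact lintegral_const_mul'' _
      (hg.mono_measure (Measure.restrict_mono (Ioo_subset_Ioo_right ht.2.le) le_rfl))
  have hsection_snd :
      ∀ x ∈ Ioo a b, ∫⁻ t in Ioo a b, W (t, x) = g x * ∫⁻ t in Ioo x b, f t := by
    intro x hx
    have hslice : (fun t ↦ W (t, x)) = (Ioi x).indicator fun t ↦ g x * f t := by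
      ext t; simp [W, Set.indicator_apply, mul_comm]
    rw [hslice, lintegral_indicator measurableSet_Ioi, Measure.restrict_restrict measurableSet_Ioi,
      Ioi_inter_Ioo, max_eq_left hx.1.le]
    exact lintegral_const_mul'' _
      (hf.mono_measure (Measure.restrict_mono (Ioo_subset_Ioo_left hx.1.le) le_rfl))
  rw [← setLIntegral_congr_fun measurableSet_Ioo hsection_fst,
    lintegral_lintegral_swap (f := fun t x ↦ W (t, x)) hW,
    ← setLIntegral_congr_fun measurableSet_Ioo hsection_snd]

theorem sq_setLIntegral_le_rpow_weighted {s : Set ℝ} (hs : MeasurableSet s) (hs0 : s ⊆ Ioi 0)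
    (a : ℝ) {u : ℝ → ℝ≥0∞} (hu : AEMeasurable u (volume.restrict s)) :
    (∫⁻ x in s, u x) ^ 2 ≤
      (∫⁻ x in s, ENNReal.ofReal (x ^ (-a))) *
        ∫⁻ x in s, ENNReal.ofReal (x ^ a) * u x ^ 2 := by
  have hinv : ∀ x ∈ s, (ENNReal.ofReal (x ^ a))⁻¹ = ENNReal.ofReal (x ^ (-a)) := by
    intro x hx
    rw [← ENNReal.ofReal_inv_of_pos (rpow_pos_of_pos (hs0 hx) a), rpow_neg (hs0 hx).le]
  rw [← setLIntegral_congr_fun hs hinv]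
  refine sq_lintegral_le_lintegral_inv_mul_lintegral hu
    (measurable_id.pow_const a).ennreal_ofReal.aemeasurable ?_
    (ae_of_all _ fun _ ↦ ENNReal.ofReal_ne_top)
  exact (ae_restrict_iff' hs).2 (ae_of_all _ fun x hx ↦
    (ENNReal.ofReal_pos.2 (rpow_pos_of_pos (hs0 hx) a)).ne')

theorem ofReal_mul_sq_abs {p : ℝ} (hp : 0 ≤ p) (y : ℝ) :
    ENNReal.ofReal (p * |y| ^ 2) = ENNReal.ofReal p * ‖y‖ₑ ^ 2 := by
  rw [ENNReal.ofReal_mul hp, ENNReal.ofReal_pow (abs_nonneg y), Real.enorm_eq_ofReal_abs]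

theorem integrableOn_Ioo_zero_of_lintegral_rpow_mul_sq_lt_top {f : ℝ → ℝ} {k b : ℝ}
    (hk : k < 1) (hf : AEStronglyMeasurable f (volume.restrict (Ioo 0 b)))
    (hfin : ∫⁻ x in Ioo 0 b, ENNReal.ofReal (x ^ k * |f x| ^ 2) < ⊤) :
    IntegrableOn f (Ioo 0 b) := by
  refine ⟨hf, hasFiniteIntegral_iff_enorm.2 ?_⟩
  have hweight : ∫⁻ x in Ioo 0 b, ENNReal.ofReal (x ^ (-k)) < ⊤ :=
    ((intervalIntegral.intervalIntegrable_rpow' (by linarith : -1 < -k)).1.mono_set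
      Ioo_subset_Ioc_self).lintegral_lt_top
  rw [setLIntegral_congr_fun measurableSet_Ioo
    fun x hx ↦ ofReal_mul_sq_abs (rpow_nonneg hx.1.le k) (f x)] at hfin
  have hCS := sq_setLIntegral_le_rpow_weighted measurableSet_Ioo (fun _ hx ↦ hx.1) k hf.enorm
  simpa using hCS.trans_lt (ENNReal.mul_lt_top hweight hfin)

theorem exists_tendsto_nhdsGT_and_sub_eq_integral {g g' : ℝ → ℝ} {a b : ℝ} (hab : a < b)
    (hderiv : ∀ x ∈ Ioc a b, HasDerivAt g (g' x) x) (hint : IntervalIntegrable g' volume a b) :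
    ∃ L, Tendsto g (𝓝[>] a) (𝓝 L) ∧ ∀ t ∈ Ioc a b, g t - L = ∫ x in a..t, g' x := by
  set L := g b - ∫ x in a..b, g' x
  have hformula : ∀ t ∈ Ioc a b, g t - L = ∫ x in a..t, g' x := by
    intro t ht
    have hsub : uIcc t b ⊆ Ioc a b := by
      rw [uIcc_of_le ht.2]; exact fun x hx ↦ ⟨ht.1.trans_le hx.1, hx.2⟩
    have hint_at : IntervalIntegrable g' volume a t :=
      hint.mono_set (uIcc_subset_uIcc_left (mem_uIcc_of_le ht.1.le ht.2))
    have hint_tb : IntervalIntegrable g' volume t b :=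
      hint.mono_set (uIcc_subset_uIcc_right (mem_uIcc_of_le ht.1.le ht.2))
    have hsplit := intervalIntegral.integral_interval_sub_left hint hint_at
    rw [intervalIntegral.integral_eq_sub_of_hasDerivAt (fun x hx ↦ hderiv x (hsub hx)) hint_tb]
      at hsplit
    linarith
  refine ⟨L, ?_, hformula⟩
  have hprim : Tendsto (fun t ↦ ∫ x in a..t, g' x) (𝓝[>] a) (𝓝 0) := by
    have := (intervalIntegral.continuousWithinAt_primitive (b₁ := a) (b₂ := b)
      (measure_singleton a) (by rwa [min_self, max_eq_right hab.le])).mono_of_mem_nhdsWithin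
      (Icc_mem_nhdsGT hab)
    simpa using this.tendsto
  refine (by simpa using hprim.const_add L : Tendsto _ _ (𝓝 L)).congr' ?_
  filter_upwards [Ioc_mem_nhdsGT hab] with t ht
  linarith [hformula t ht]

theorem rpow_mul_sq_lintegral_Ioo_le {k t : ℝ} (hk : k < 1) (ht : 0 < t) {u : ℝ → ℝ≥0∞}
    (hu : AEMeasurable u (volume.restrict (Ioo 0 t))) :
    ENNReal.ofReal (t ^ (k - 2)) * (∫⁻ x in Ioo 0 t, u x) ^ 2 ≤
      ENNReal.ofReal (2 / (1 - k)) * (ENNReal.ofReal (t ^ ((k - 3) / 2)) *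
        ∫⁻ x in Ioo 0 t, ENNReal.ofReal (x ^ ((k + 1) / 2)) * u x ^ 2) := by
  have hk' : 0 < 1 - k := by linarith
  have hCS :=
    sq_setLIntegral_le_rpow_weighted measurableSet_Ioo (fun _ hx ↦ hx.1) ((k + 1) / 2) hu
  rw [lintegral_Ioo_rpow_of_neg_one_lt (by linarith) ht.le] at hCS
  calc _ ≤ ENNReal.ofReal (t ^ (k - 2)) * (ENNReal.ofReal (t ^ (-((k + 1) / 2) + 1) /
        (-((k + 1) / 2) + 1)) *
          ∫⁻ x in Ioo 0 t, ENNReal.ofReal (x ^ ((k + 1) / 2)) * u x ^ 2) := by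
        gcongr
    _ = _ := by
      rw [← mul_assoc, ← mul_assoc, ← ENNReal.ofReal_mul (rpow_nonneg ht.le _),
        ← ENNReal.ofReal_mul (by positivity)]
      congr 2
      rw [mul_div_assoc', ← rpow_add ht, show k - 2 + (-((k + 1) / 2) + 1) = (k - 3) / 2 by ring,
        show -((k + 1) / 2) + 1 = (1 - k) / 2 by ring]
      field_simp

theorem rpow_mul_lintegral_Ioo_rpow_le {k x : ℝ} (hk : k < 1) (hx : 0 < x) (b : ℝ) :
    ENNReal.ofReal (x ^ ((k + 1) / 2)) * ∫⁻ t in Ioo x b, ENNReal.ofReal (t ^ ((k - 3) / 2)) ≤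
      ENNReal.ofReal (2 / (1 - k)) * ENNReal.ofReal (x ^ k) := by
  have hk' : 0 < 1 - k := by linarith
  have hexp : x ^ ((k + 1) / 2) * (-x ^ ((k - 3) / 2 + 1) / ((k - 3) / 2 + 1)) =
      2 / (1 - k) * x ^ k := by
    rw [mul_div_assoc', mul_neg, ← rpow_add hx, show (k + 1) / 2 + ((k - 3) / 2 + 1) = k by ring,
      show (k - 3) / 2 + 1 = -((1 - k) / 2) by ring]
    field_simp
  calc _ ≤ ENNReal.ofReal (x ^ ((k + 1) / 2)) *
        ∫⁻ t in Ioi x, ENNReal.ofReal (t ^ ((k - 3) / 2)) := by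
        gcongr; exact Ioo_subset_Ioi_self
    _ = _ := by
      rw [lintegral_Ioi_rpow_of_lt (by linarith) hx, ← ENNReal.ofReal_mul (rpow_nonneg hx.le _),
        hexp, ENNReal.ofReal_mul (by positivity)]

theorem lintegral_rpow_mul_sq_lintegral_le {k b : ℝ} (hk : k < 1) {u : ℝ → ℝ≥0∞}
    (hu : AEMeasurable u (volume.restrict (Ioo 0 b))) :
    ∫⁻ t in Ioo 0 b, ENNReal.ofReal (t ^ (k - 2)) * (∫⁻ x in Ioo 0 t, u x) ^ 2 ≤
      ENNReal.ofReal (2 / (1 - k)) ^ 2 * ∫⁻ x in Ioo 0 b, ENNReal.ofReal (x ^ k) * u x ^ 2 := by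
  set c := ENNReal.ofReal (2 / (1 - k))
  set v : ℝ → ℝ≥0∞ := fun x ↦ ENNReal.ofReal (x ^ ((k + 1) / 2)) * u x ^ 2
  have hv : AEMeasurable v (volume.restrict (Ioo 0 b)) :=
    (measurable_id.pow_const _).ennreal_ofReal.aemeasurable.mul (hu.pow_const 2)
  have htail : ∀ x ∈ Ioo 0 b, v x * ∫⁻ t in Ioo x b, ENNReal.ofReal (t ^ ((k - 3) / 2)) ≤
      c * (ENNReal.ofReal (x ^ k) * u x ^ 2) := fun x hx ↦ by
    rw [mul_right_comm, ← mul_assoc c]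
    gcongr ?_ * _
    exact rpow_mul_lintegral_Ioo_rpow_le hk hx.1 b
  calc _ ≤ ∫⁻ t in Ioo 0 b,
        c * (ENNReal.ofReal (t ^ ((k - 3) / 2)) * ∫⁻ x in Ioo 0 t, v x) :=
        setLIntegral_mono' measurableSet_Ioo fun t ht ↦ rpow_mul_sq_lintegral_Ioo_le hk ht.1
          (hu.mono_measure (Measure.restrict_mono (Ioo_subset_Ioo_right ht.2.le) le_rfl))
    _ = c * ∫⁻ x in Ioo 0 b, v x * ∫⁻ t in Ioo x b, ENNReal.ofReal (t ^ ((k - 3) / 2)) := by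
        rw [lintegral_const_mul' _ _ ENNReal.ofReal_ne_top,
          lintegral_mul_lintegral_Ioo_swap (f := fun t ↦ ENNReal.ofReal (t ^ ((k - 3) / 2)))
            (measurable_id.pow_const _).ennreal_ofReal.aemeasurable hv]
    _ ≤ c * ∫⁻ x in Ioo 0 b, c * (ENNReal.ofReal (x ^ k) * u x ^ 2) := by
        gcongr c * ?_
        exact setLIntegral_mono' measurableSet_Ioo htail
    _ = _ := by rw [lintegral_const_mul' _ _ ENNReal.ofReal_ne_top, sq, mul_assoc]

/-- Hardy inequality, case `k < 1`: for `k < 1` there is a constant `C`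
depending only on `k` such that every `C¹` function `g` on `(0,1]` with finite weighted
integrals has a trace `g(0)` at `0`, and
`∫₀¹ s^(k-2) |g - g(0)|² ds ≤ C ∫₀¹ s^k |g'|² ds`. -/
theorem hardy_inequality_k_lt_one (k : ℝ) (hk : k < 1) :
    ∃ C : ℝ≥0, ∀ g g' : ℝ → ℝ,
      (∀ s ∈ Ioc (0 : ℝ) 1, HasDerivAt g (g' s) s) →
      ContinuousOn g' (Ioc (0 : ℝ) 1) →
      (∫⁻ s in Ioo (0 : ℝ) 1, ENNReal.ofReal (s ^ k * |g' s| ^ 2)) < ⊤ →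
      (∫⁻ s in Ioo (0 : ℝ) 1, ENNReal.ofReal (s ^ k * |g s| ^ 2)) < ⊤ →
      ∃ g0 : ℝ, Tendsto g (𝓝[>] (0 : ℝ)) (𝓝 g0) ∧
        (∫⁻ s in Ioo (0 : ℝ) 1, ENNReal.ofReal (s ^ (k - 2) * |g s - g0| ^ 2))
          ≤ C * ∫⁻ s in Ioo (0 : ℝ) 1, ENNReal.ofReal (s ^ k * |g' s| ^ 2) := by
  refine ⟨(2 / (1 - k)).toNNReal ^ 2, fun g g' hderiv hg'cont hfin _ ↦ ?_⟩
  have hg'meas : AEMeasurable g' (volume.restrict (Ioo 0 1)) :=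
    (hg'cont.mono Ioo_subset_Ioc_self).aemeasurable measurableSet_Ioo
  have hint : IntegrableOn g' (Ioo 0 1) :=
    integrableOn_Ioo_zero_of_lintegral_rpow_mul_sq_lt_top hk hg'meas.aestronglyMeasurable hfin
  obtain ⟨g0, hlim, hftc⟩ := exists_tendsto_nhdsGT_and_sub_eq_integral one_pos hderiv
    ((intervalIntegrable_iff_integrableOn_Ioo_of_le zero_le_one).2 hint)
  refine ⟨g0, hlim, ?_⟩
  have hpoint : ∀ t ∈ Ioo (0 : ℝ) 1, ENNReal.ofReal (t ^ (k - 2) * |g t - g0| ^ 2) ≤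
      ENNReal.ofReal (t ^ (k - 2)) * (∫⁻ x in Ioo 0 t, ‖g' x‖ₑ) ^ 2 := by
    intro t ht
    rw [ofReal_mul_sq_abs (rpow_nonneg ht.1.le _), hftc t (Ioo_subset_Ioc_self ht),
      intervalIntegral.integral_of_le ht.1.le, integral_Ioc_eq_integral_Ioo]
    gcongr
    exact enorm_integral_le_lintegral_enorm _
  calc _ ≤ ∫⁻ t in Ioo 0 1,
        ENNReal.ofReal (t ^ (k - 2)) * (∫⁻ x in Ioo 0 t, ‖g' x‖ₑ) ^ 2 :=
        setLIntegral_mono' measurableSet_Ioo hpoint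
    _ ≤ ENNReal.ofReal (2 / (1 - k)) ^ 2 *
          ∫⁻ x in Ioo 0 1, ENNReal.ofReal (x ^ k) * ‖g' x‖ₑ ^ 2 :=
        lintegral_rpow_mul_sq_lintegral_le hk hg'meas.enorm
    _ = _ := by
        rw [setLIntegral_congr_fun measurableSet_Ioo
          fun x hx ↦ ofReal_mul_sq_abs (rpow_nonneg hx.1.le k) (g' x), ENNReal.coe_pow]
        rfl
end
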